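/- arXiv:2203.05685 — 2 statements merged into one kernel-verified Lean document; each statement's English description precedes it below -/
import Mathlib

section
/- Interpolation error bound: let S be a simplex in R^d with diameter h, let f: R^d -> R be twice continuously differentiable with the operator norm of its Hessian bounded by M on S, and let f_hat be the barycentric interpolant of f on S. Then for every q in S, |f(q) - f_hat(q)| <= M h^2. -/
/-- Interpolation error bound for the barycentric interpolant on a simplex:
if `f` is `C²` with Hessian operator norm bounded by `M` on the simplex `S`
of diameter `h`, then `|f q - f̂ q| ≤ M * h ^ 2` on `S`. -/
theorem barycentric_interpolation_error
    (d : ℕ) (s : Fin (d + 1) → EuclideanSpace ℝ (Fin d))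
    (hs : AffineIndependent ℝ s)
    (S : Set (EuclideanSpace ℝ (Fin d))) (hS : S = convexHull ℝ (Set.range s))
    (f : EuclideanSpace ℝ (Fin d) → ℝ)
    (U : Set (EuclideanSpace ℝ (Fin d)))
    (hU : IsOpen U) (hUconv : Convex ℝ U) (hSU : S ⊆ U)
    (hf : ContDiffOn ℝ 2 f U) (M : ℝ)
    (hM : ∀ x ∈ S, ‖iteratedFDerivWithin ℝ 2 f U x‖ ≤ M)
    (q : EuclideanSpace ℝ (Fin d)) (hq : q ∈ S)
    (w : Fin (d + 1) → ℝ)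
    (hw : ∀ i, 0 ≤ w i) (hw1 : ∑ i, w i = 1) (hqw : q = ∑ i, w i • s i) :
    |f q - ∑ i, w i * f (s i)| ≤ M * Metric.diam S ^ 2 := by
  classical
  set h := Metric.diam S with hh
  have hSconv : Convex ℝ S := hS ▸ convex_convexHull ℝ _
  have hsS : ∀ i, s i ∈ S := fun i => hS ▸ subset_convexHull ℝ _ ⟨i, rfl⟩
  have hbd : Bornology.IsBounded S := by
    rw [hS]; exact isBounded_convexHull.mpr (Set.finite_range s).isBounded
  have hdist : ∀ x ∈ S, ∀ y ∈ S, ‖x - y‖ ≤ h := fun x hx y hy => by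
    rw [← dist_eq_norm]; exact Metric.dist_le_diam_of_mem hbd hx hy
  have hM0 : 0 ≤ M := le_trans (norm_nonneg _) (hM q hq)
  have hh0 : 0 ≤ h := Metric.diam_nonneg
  -- differentiability facts
  have hfd : DifferentiableOn ℝ f U := hf.differentiableOn (by norm_num)
  have hf'at : ∀ x ∈ U, HasFDerivAt f (fderiv ℝ f x) x := fun x hx =>
    ((hfd x hx).differentiableAt (hU.mem_nhds hx)).hasFDerivAt
  have hf'cd : ContDiffOn ℝ 1 (fderiv ℝ f) U := hf.fderiv_of_isOpen hU (by norm_num)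
  have hf'd : DifferentiableOn ℝ (fderiv ℝ f) U := hf'cd.differentiableOn (by norm_num)
  -- Hessian bound
  have hHess : ∀ x ∈ S, ‖fderiv ℝ (fderiv ℝ f) x‖ ≤ M := by
    intro x hx
    have hIt : ‖iteratedFDeriv ℝ 2 f x‖ ≤ M := by
      rw [← iteratedFDerivWithin_of_isOpen 2 hU (hSU hx)]
      exact hM x hx
    apply ContinuousLinearMap.opNorm_le_bound _ hM0
    intro y
    apply ContinuousLinearMap.opNorm_le_bound _ (by positivity)
    intro z
    have := iteratedFDeriv_two_apply (𝕜 := ℝ) f x ![y, z]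
    simp only [Matrix.cons_val_zero, Matrix.cons_val_one, Matrix.head_cons] at this
    rw [← this]
    calc ‖iteratedFDeriv ℝ 2 f x ![y, z]‖
        ≤ ‖iteratedFDeriv ℝ 2 f x‖ * ∏ i, ‖(![y, z]) i‖ :=
          (iteratedFDeriv ℝ 2 f x).le_opNorm _
      _ = ‖iteratedFDeriv ℝ 2 f x‖ * (‖y‖ * ‖z‖) := by
          rw [Fin.prod_univ_two]; rfl
      _ ≤ M * (‖y‖ * ‖z‖) := by
          apply mul_le_mul_of_nonneg_right hIt (by positivity)
      _ = M * ‖y‖ * ‖z‖ := by ring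
  -- first-order: Lipschitz bound on the derivative over S
  have step1 : ∀ x ∈ S, ‖fderiv ℝ f x - fderiv ℝ f q‖ ≤ M * h := by
    intro x hx
    have := Convex.norm_image_sub_le_of_norm_hasFDerivWithin_le
      (f := fderiv ℝ f) (f' := fun y => fderiv ℝ (fderiv ℝ f) y) (s := S)
      (fun y hy => (((hf'd y (hSU hy)).differentiableAt
        (hU.mem_nhds (hSU hy))).hasFDerivAt).hasFDerivWithinAt)
      hHess hSconv hq hx
    calc ‖fderiv ℝ f x - fderiv ℝ f q‖ ≤ M * ‖x - q‖ := this
      _ ≤ M * h := mul_le_mul_of_nonneg_left (hdist x hx q hq) hM0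
  set φ := fderiv ℝ f q with hφ
  -- Taylor remainder bound at the vertices
  have hR : ∀ i, ‖f (s i) - f q - φ (s i - q)‖ ≤ M * h * h := by
    intro i
    have := Convex.norm_image_sub_le_of_norm_hasFDerivWithin_le'
      (f := f) (f' := fun y => fderiv ℝ f y) (φ := φ) (s := S) (C := M * h)
      (fun y hy => (hf'at y (hSU hy)).hasFDerivWithinAt)
      step1 hSconv hq (hsS i)
    calc ‖f (s i) - f q - φ (s i - q)‖ ≤ M * h * ‖s i - q‖ := this
      _ ≤ M * h * h := mul_le_mul_of_nonneg_left (hdist _ (hsS i) q hq) (by positivity)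
  -- the linear terms sum to zero
  have hsum0 : (∑ i, w i • (s i - q)) = 0 := by
    have e1 : (∑ i, w i • (s i - q)) = (∑ i, w i • s i) - (∑ i, w i) • q := by
      rw [Finset.sum_smul]
      rw [← Finset.sum_sub_distrib]
      congr 1 with i
      rw [smul_sub]
    rw [e1, hw1, one_smul, ← hqw, sub_self]
  have hφ0 : ∑ i, w i * φ (s i - q) = 0 := by
    have : ∑ i, w i * φ (s i - q) = φ (∑ i, w i • (s i - q)) := by
      rw [map_sum]
      congr 1 with i
      rw [map_smul]
      rfl
    rw [this, hsum0, map_zero]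
  -- algebraic identity
  have key : f q - ∑ i, w i * f (s i) = -∑ i, w i * (f (s i) - f q - φ (s i - q)) := by
    have e2 : ∑ i, w i * (f (s i) - f q - φ (s i - q)) =
        (∑ i, w i * f (s i)) - (∑ i, w i) * f q - ∑ i, w i * φ (s i - q) := by
      rw [Finset.sum_mul, ← Finset.sum_sub_distrib, ← Finset.sum_sub_distrib]
      congr 1 with i
      ring
    rw [e2, hφ0, hw1]
    ring
  rw [key, abs_neg, ← Real.norm_eq_abs]
  calc ‖∑ i, w i * (f (s i) - f q - φ (s i - q))‖
      ≤ ∑ i, ‖w i * (f (s i) - f q - φ (s i - q))‖ := norm_sum_le _ _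
    _ ≤ ∑ i, w i * (M * h * h) := by
        apply Finset.sum_le_sum
        intro i _
        rw [norm_mul, Real.norm_eq_abs (w i), abs_of_nonneg (hw i)]
        exact mul_le_mul_of_nonneg_left (hR i) (hw i)
    _ = M * h ^ 2 := by rw [← Finset.sum_mul, hw1]; ring
end

section
/- Gradient interpolation error on a simplex: let S be a simplex in R^d with affinely independent vertices, diameter h, and minimal height (distance from each vertex to the affine hull of the opposite face) at least rho > 0. If f is C^2 with Hessian operator norm bounded by M on S and f_hat is the barycentric interpolant of f on S, then the constant gradient of f_hat satisfies |grad f_hat - grad f(q)| <= C(d) * M * h^2 / rho for every q in S, where C(d) is a constant depending only on d. -/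
/-!
Write `λᵢ` for the linear parts of the barycentric coordinates of the simplex. Since
`∑ λᵢ(v) = 0` and `∑ λᵢ(v) • (sᵢ - q) = v`, for any constant `κ`
`‖v‖² = ∑ λᵢ(v) (⟪v, sᵢ - q⟫ - κ)`. Moving a vertex `sᵢ` by `-v / λᵢ(v)` lands on its opposite
face, so `|λᵢ(v)| ≤ ‖v‖ / ρ`. For `v = a - ∇f(q)` and a suitable `κ`, `⟪v, sᵢ - q⟫ - κ` is the
second-order Taylor remainder of `f` at `q` in the direction of `sᵢ`, of size at most `M h²`;
hence `‖v‖² ≤ (d + 1) ‖v‖ M h² / ρ`.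
-/

open RealInnerProductSpace

section Taylor

variable {E F : Type*} [NormedAddCommGroup E] [NormedSpace ℝ E]
  [NormedAddCommGroup F] [NormedSpace ℝ F]

theorem Convex.norm_image_sub_sub_fderiv_le {f : E → F} {f' : E → E →L[ℝ] F}
    {f'' : E → E →L[ℝ] E →L[ℝ] F} {s : Set E} {M : ℝ} (hs : Convex ℝ s)
    (hf : ∀ x ∈ s, HasFDerivWithinAt f (f' x) s x)
    (hf' : ∀ x ∈ s, HasFDerivWithinAt f' (f'' x) s x) (hM : ∀ x ∈ s, ‖f'' x‖ ≤ M)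
    {x y : E} (hx : x ∈ s) (hy : y ∈ s) :
    ‖f y - f x - f' x (y - x)‖ ≤ M * ‖y - x‖ ^ 2 := by
  have hseg : segment ℝ x y ⊆ s := hs.segment_subset hx hy
  have hM0 : 0 ≤ M := (norm_nonneg (f'' x)).trans (hM x hx)
  have hf'_near : ∀ z ∈ segment ℝ x y, ‖f' z - f' x‖ ≤ M * ‖y - x‖ := fun z hz =>
    calc ‖f' z - f' x‖ ≤ M * ‖z - x‖ :=
          hs.norm_image_sub_le_of_norm_hasFDerivWithin_le hf' hM hx (hseg hz)
      _ ≤ M * ‖y - x‖ := by gcongr; exact norm_sub_le_of_mem_segment hz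
  calc ‖f y - f x - f' x (y - x)‖ ≤ M * ‖y - x‖ * ‖y - x‖ :=
        (convex_segment x y).norm_image_sub_le_of_norm_hasFDerivWithin_le'
          (fun z hz => (hf z (hseg hz)).mono hseg) hf'_near
          (left_mem_segment ℝ x y) (right_mem_segment ℝ x y)
    _ = M * ‖y - x‖ ^ 2 := by ring

theorem Convex.norm_image_sub_sub_fderiv_le_of_contDiffAt {f : E → F} {s : Set E} {M : ℝ}
    (hs : Convex ℝ s) (hf : ∀ x ∈ s, ContDiffAt ℝ 2 f x)
    (hM : ∀ x ∈ s, ‖iteratedFDeriv ℝ 2 f x‖ ≤ M) {x y : E} (hx : x ∈ s) (hy : y ∈ s) :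
    ‖f y - f x - fderiv ℝ f x (y - x)‖ ≤ M * ‖y - x‖ ^ 2 :=
  hs.norm_image_sub_sub_fderiv_le
    (fun z hz => ((hf z hz).differentiableAt (by norm_num)).hasFDerivAt.hasFDerivWithinAt)
    (fun z hz => (((hf z hz).fderiv_right (m := 1) (by norm_num)).differentiableAt
      one_ne_zero).hasFDerivAt.hasFDerivWithinAt)
    (fun z hz => by rw [← norm_iteratedFDeriv_one, norm_iteratedFDeriv_fderiv]; exact hM z hz)
    hx hy

end Taylor

namespace AffineBasis

section Ring

variable {ι k V P : Type*} [Ring k] [AddCommGroup V] [Module k V] [AddTorsor V P]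

theorem mem_affineSpan_image_ne_of_coord_eq_zero [Fintype ι] [Nontrivial k]
    (b : AffineBasis ι k P) {i : ι} {p : P} (hp : b.coord i p = 0) :
    p ∈ affineSpan k (b '' {j | j ≠ i}) := by
  rw [← b.affineCombination_coord_eq_self p]
  refine affineCombination_mem_affineSpan_image (b.sum_coord_apply_eq_one p) (fun j _ hj => ?_) b
  rw [Set.mem_ofPred_eq, not_not] at hj
  rwa [hj]

theorem coord_linear_eq (b : AffineBasis ι k P) (i : ι) (v : V) (q : P) :
    (b.coord i).linear v = b.coord i (v +ᵥ q) - b.coord i q := by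
  rw [AffineMap.map_vadd, vadd_eq_add, add_sub_cancel_right]

theorem sum_coord_linear_eq_zero [Fintype ι] (b : AffineBasis ι k P) (v : V) :
    ∑ i, (b.coord i).linear v = 0 := by
  obtain ⟨i₀⟩ := b.nonempty
  simp only [b.coord_linear_eq _ v (b i₀), Finset.sum_sub_distrib, b.sum_coord_apply_eq_one,
    sub_self]

theorem sum_coord_smul_vsub [Fintype ι] (b : AffineBasis ι k P) (p q : P) :
    ∑ i, b.coord i p • (b i -ᵥ q) = p -ᵥ q := by
  conv_rhs => rw [← b.affineCombination_coord_eq_self p,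
    Finset.univ.affineCombination_eq_weightedVSubOfPoint_vadd_of_sum_eq_one _ _
      (b.sum_coord_apply_eq_one p) q, vadd_vsub]
  rw [Finset.weightedVSubOfPoint_apply]

theorem sum_coord_linear_smul_vsub [Fintype ι] (b : AffineBasis ι k P) (v : V) (q : P) :
    ∑ i, (b.coord i).linear v • (b i -ᵥ q) = v := by
  simp only [b.coord_linear_eq _ v q, sub_smul, Finset.sum_sub_distrib, sum_coord_smul_vsub,
    vadd_vsub, vsub_self, sub_zero]

end Ring

variable {ι V P : Type*} [Fintype ι]

theorem abs_coord_linear_mul_infDist_le [NormedAddCommGroup V] [NormedSpace ℝ V]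
    [MetricSpace P] [NormedAddTorsor V P] (b : AffineBasis ι ℝ P) (i : ι) (v : V) :
    |(b.coord i).linear v| * Metric.infDist (b i) (affineSpan ℝ (b '' {j | j ≠ i})) ≤ ‖v‖ := by
  set t := (b.coord i).linear v
  rcases eq_or_ne t 0 with ht | ht
  · simp [ht]
  have hface : (-t⁻¹ • v) +ᵥ b i ∈ affineSpan ℝ (b '' {j | j ≠ i}) := by
    refine b.mem_affineSpan_image_ne_of_coord_eq_zero ?_
    rw [AffineMap.map_vadd, b.coord_apply_eq, map_smul, smul_eq_mul, vadd_eq_add,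
      neg_mul, inv_mul_cancel₀ ht, neg_add_cancel]
  calc |t| * Metric.infDist (b i) (affineSpan ℝ (b '' {j | j ≠ i}))
      ≤ |t| * dist (b i) ((-t⁻¹ • v) +ᵥ b i) := by
        gcongr; exact Metric.infDist_le_dist_of_mem hface
    _ = ‖v‖ := by
        rw [dist_comm, dist_vadd_left, norm_smul, norm_neg, norm_inv, Real.norm_eq_abs,
          ← mul_assoc, mul_inv_cancel₀ (abs_ne_zero.2 ht), one_mul]

theorem norm_le_of_abs_inner_vsub_sub_le [NormedAddCommGroup V] [InnerProductSpace ℝ V]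
    [MetricSpace P] [NormedAddTorsor V P] (b : AffineBasis ι ℝ P) {ρ : ℝ} (hρ : 0 < ρ)
    (hheight : ∀ i, ρ ≤ Metric.infDist (b i) (affineSpan ℝ (b '' {j | j ≠ i})))
    (q : P) (v : V) {κ ε : ℝ} (hv : ∀ i, |⟪v, b i -ᵥ q⟫ - κ| ≤ ε) :
    ‖v‖ ≤ Fintype.card ι * ε / ρ := by
  have hε : 0 ≤ ε := by obtain ⟨i⟩ := b.nonempty; exact (abs_nonneg _).trans (hv i)
  have hcoord : ∀ i, |(b.coord i).linear v| ≤ ‖v‖ / ρ := fun i => by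
    rw [le_div_iff₀ hρ]
    exact (mul_le_mul_of_nonneg_left (hheight i) (abs_nonneg _)).trans
      (b.abs_coord_linear_mul_infDist_le i v)
  have hsq : ‖v‖ ^ 2 = ∑ i, (b.coord i).linear v * (⟪v, b i -ᵥ q⟫ - κ) := by
    simp only [mul_sub, Finset.sum_sub_distrib, ← Finset.sum_mul, b.sum_coord_linear_eq_zero,
      zero_mul, sub_zero, ← real_inner_smul_right, ← inner_sum, b.sum_coord_linear_smul_vsub,
      real_inner_self_eq_norm_sq]
  have hle : ‖v‖ ^ 2 ≤ ‖v‖ * (Fintype.card ι * ε / ρ) :=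
    calc ‖v‖ ^ 2 ≤ ∑ i, |(b.coord i).linear v| * |⟪v, b i -ᵥ q⟫ - κ| := by
          rw [hsq]; exact Finset.sum_le_sum fun i _ => (le_abs_self _).trans (abs_mul _ _).le
      _ ≤ ∑ _i : ι, ‖v‖ / ρ * ε :=
          Finset.sum_le_sum fun i _ => mul_le_mul (hcoord i) (hv i) (abs_nonneg _)
            (by positivity)
      _ = ‖v‖ * (Fintype.card ι * ε / ρ) := by
          rw [Finset.sum_const, Finset.card_univ, nsmul_eq_mul]; ring
  nlinarith [norm_nonneg v, show 0 ≤ Fintype.card ι * ε / ρ by positivity]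

end AffineBasis

/-- Gradient interpolation error on a simplex: there is a constant `C(d)`,
depending only on `d`, such that for every simplex with diameter `h` and
minimal vertex height at least `ρ`, and every `C²` function `f` with Hessian
norm at most `M` on the simplex, the constant gradient `a` of the barycentric
(affine) interpolant satisfies `‖a - ∇f q‖ ≤ C(d) M h² / ρ` on the simplex. -/
theorem gradient_interpolation_error (d : ℕ) :
    ∃ C : ℝ, 0 < C ∧
      ∀ (s : Fin (d + 1) → EuclideanSpace ℝ (Fin d)),
        AffineIndependent ℝ s →
        ∀ (S : Set (EuclideanSpace ℝ (Fin d))),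
          S = convexHull ℝ (Set.range s) →
          ∀ (ρ : ℝ), 0 < ρ →
            (∀ i : Fin (d + 1),
              ρ ≤ Metric.infDist (s i)
                    (affineSpan ℝ (s '' {j | j ≠ i}) : Set (EuclideanSpace ℝ (Fin d)))) →
            ∀ (f : EuclideanSpace ℝ (Fin d) → ℝ)
              (U : Set (EuclideanSpace ℝ (Fin d))),
              IsOpen U → Convex ℝ U → S ⊆ U → ContDiffOn ℝ 2 f U →
              ∀ (M : ℝ),
                (∀ x ∈ S, ‖iteratedFDerivWithin ℝ 2 f U x‖ ≤ M) →
                ∀ (a : EuclideanSpace ℝ (Fin d)) (c : ℝ),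
                  (∀ i, (inner ℝ a (s i) : ℝ) + c = f (s i)) →
                  ∀ q ∈ S,
                    ‖a - gradient f q‖ ≤ C * M * Metric.diam S ^ 2 / ρ := by
  refine ⟨d + 1, by positivity, ?_⟩
  intro s hind S hS ρ hρ hheight f U hU _ hSU hf M hM a c hinterp q hq
  let b : AffineBasis (Fin (d + 1)) ℝ (EuclideanSpace ℝ (Fin d)) :=
    ⟨s, hind, hind.affineSpan_eq_top_iff_card_eq_finrank_add_one.2 (by simp)⟩
  have hS_conv : Convex ℝ S := hS ▸ convex_convexHull ℝ _
  have hS_bdd : Bornology.IsBounded S :=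
    hS ▸ ((Set.finite_range s).isCompact_convexHull ℝ).isBounded
  have hM0 : 0 ≤ M := (norm_nonneg _).trans (hM q hq)
  have htaylor : ∀ x ∈ S, ‖f x - f q - fderiv ℝ f q (x - q)‖ ≤ M * Metric.diam S ^ 2 :=
    fun x hx => calc
      _ ≤ M * ‖x - q‖ ^ 2 := hS_conv.norm_image_sub_sub_fderiv_le_of_contDiffAt
          (fun y hy => hf.contDiffAt (hU.mem_nhds (hSU hy)))
          (fun y hy => iteratedFDerivWithin_of_isOpen (𝕜 := ℝ) (f := f) 2 hU (hSU hy) ▸ hM y hy)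
          hq hx
      _ ≤ M * Metric.diam S ^ 2 := by
          rw [← dist_eq_norm]; gcongr; exact Metric.dist_le_diam_of_mem hS_bdd hx hq
  have hremainder : ∀ i, |⟪a - gradient f q, b i -ᵥ q⟫ - (f q - c - ⟪a, q⟫)|
      ≤ M * Metric.diam S ^ 2 := fun i => by
    have hexpand : ⟪a - gradient f q, s i - q⟫ - (f q - c - ⟪a, q⟫)
        = f (s i) - f q - fderiv ℝ f q (s i - q) := by
      rw [inner_sub_left, inner_gradient_left, inner_sub_right, ← hinterp i]; ring
    change |⟪a - gradient f q, s i - q⟫ - _| ≤ _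
    rw [hexpand, ← Real.norm_eq_abs]
    exact htaylor _ (hS ▸ subset_convexHull ℝ _ ⟨i, rfl⟩)
  simpa [mul_assoc] using b.norm_le_of_abs_inner_vsub_sub_le hρ hheight q _ hremainder
end
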